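/- The set of eigenvalues of the operator L ρ = (ρ_xx + r⋆^{−2}ρ) − (1/2π)∫_{𝕋}(ρ_xx + r⋆^{−2}ρ) dx on 2π-periodic C² functions equals {0} ∪ {r⋆^{−2} − k² : k ∈ ℤ \ {0}}. -/

import Mathlib

/-!
Integrating `L ρ = μ ρ` over a period kills the left-hand side, so for `μ ≠ 0` an eigenfunction
has mean zero; then the averaging term of `L` vanishes and `ρ'' = (μ - c⁻²) ρ`. On Fourier
coefficients this reads `(μ - c⁻² + n²) ρ̂ n = 0`, with `ρ̂ 0 = 0`. By Parseval a continuous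
periodic function with vanishing Fourier coefficients is zero, so some `n ≠ 0` has
`μ = c⁻² - n²`. Conversely, constants and `cos (k x)` are eigenfunctions.
-/

open Real

/-- The linearization of the averaged mean curvature flow at the cylinder of radius `c`. -/
noncomputable def Lop (c : ℝ) (ρ : ℝ → ℝ) (x : ℝ) : ℝ :=
  (deriv (deriv ρ) x + ρ x / c ^ 2) -
    (1 / (2 * π)) * ∫ y in (-π)..π, (deriv (deriv ρ) y + ρ y / c ^ 2)

open Function MeasureTheory Set
open scoped Interval

theorem Function.Periodic.deriv {𝕜 F : Type*} [NontriviallyNormedField 𝕜] [NormedAddCommGroup F]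
    [NormedSpace 𝕜 F] {f : 𝕜 → F} {c : 𝕜} (h : Periodic f c) : Periodic (deriv f) c := fun x => by
  rw [← deriv_comp_add_const, show (fun y => f (y + c)) = f from funext h]

section Fourier

open Complex

theorem fourierCoeffOn_derivative_of_endpoints_eq {a b : ℝ} (hab : a < b) {f f' : ℝ → ℂ}
    (hf : ∀ x ∈ [[a, b]], HasDerivAt f (f' x) x) (hf' : IntervalIntegrable f' volume a b)
    (hfab : f b = f a) (n : ℤ) :
    fourierCoeffOn hab f' n = 2 * π * I * n / (b - a) * fourierCoeffOn hab f n := by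
  rcases eq_or_ne n 0 with rfl | hn
  · simp [fourierCoeffOn_eq_integral, intervalIntegral.integral_eq_sub_of_hasDerivAt hf hf', hfab]
  · have hn' : (n : ℂ) ≠ 0 := by exact_mod_cast hn
    have hba : (b : ℂ) - a ≠ 0 := sub_ne_zero.mpr (by exact_mod_cast hab.ne')
    rw [fourierCoeffOn_of_hasDerivAt hab hn hf hf', hfab, sub_self, mul_zero, zero_sub]
    field_simp

theorem fourierCoeffOn_second_derivative_of_endpoints_eq {a b : ℝ} (hab : a < b)
    {f f' f'' : ℝ → ℂ} (hf : ∀ x, HasDerivAt f (f' x) x) (hf' : ∀ x, HasDerivAt f' (f'' x) x)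
    (hf'' : Continuous f'') (hfab : f b = f a) (hf'ab : f' b = f' a) (n : ℤ) :
    fourierCoeffOn hab f'' n = -(2 * π * n / (b - a)) ^ 2 * fourierCoeffOn hab f n := by
  have hf'c : Continuous f' := continuous_iff_continuousAt.mpr fun x => (hf' x).continuousAt
  rw [fourierCoeffOn_derivative_of_endpoints_eq hab (fun x _ => hf' x)
      (hf''.intervalIntegrable a b) hf'ab,
    fourierCoeffOn_derivative_of_endpoints_eq hab (fun x _ => hf x)
      (hf'c.intervalIntegrable a b) hfab, ← mul_assoc]
  congr 1
  linear_combination (2 * π * n / (b - a)) ^ 2 * I_sq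

theorem Function.Periodic.eq_zero_of_fourierCoeffOn_eq_zero {a b : ℝ} (hab : a < b) {f : ℝ → ℂ}
    (hf : Continuous f) (hper : Periodic f (b - a)) (h : ∀ n, fourierCoeffOn hab f n = 0) :
    f = 0 := by
  obtain ⟨C, hC⟩ := (isCompact_Icc (a := a) (b := b)).exists_bound_of_continuousOn hf.continuousOn
  have hL2 : MemLp f 2 (volume.restrict (Ioc a b)) :=
    .of_bound hf.aestronglyMeasurable C
      (ae_restrict_of_forall_mem measurableSet_Ioc fun x hx => hC x (Ioc_subset_Icc_self hx))
  have hnorm : ∫ x in a..b, ‖f x‖ ^ 2 = 0 := by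
    have hsum : HasSum (fun n => ‖fourierCoeffOn hab f n‖ ^ 2) 0 := by
      simp [h]
    simpa [(sub_pos.mpr hab).ne'] using (hasSum_sq_fourierCoeffOn hab hL2).unique hsum
  have hIcc : ∀ x ∈ Icc a b, f x = 0 := by
    intro x hx
    by_contra hfx
    refine (intervalIntegral.integral_pos hab (by fun_prop) (fun _ _ => by positivity)
      ⟨x, hx, by positivity⟩).ne' hnorm
  funext x
  obtain ⟨y, hy, hxy⟩ := hper.exists_mem_Ico (sub_pos.mpr hab) x a
  rw [hxy, Pi.zero_apply]
  exact hIcc y (by simpa using Ico_subset_Icc_self hy)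

theorem exists_eq_neg_sq_of_deriv_deriv_eq_mul {ρ : ℝ → ℝ} {s : ℝ} (hρ : ContDiff ℝ 2 ρ)
    (hper : Periodic ρ (2 * π)) (hρne : ρ ≠ 0) (hmean : ∫ x in (-π)..π, ρ x = 0)
    (hode : ∀ x, deriv (deriv ρ) x = s * ρ x) : ∃ k : ℤ, k ≠ 0 ∧ s = -(k : ℝ) ^ 2 := by
  have hπ : -π < π := neg_lt_self pi_pos
  have hlen : π - -π = 2 * π := by ring
  have hperC : Periodic (fun x => (ρ x : ℂ)) (π - -π) := fun x => by simp [hlen, hper x]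
  set coeff := fourierCoeffOn hπ (fun x => (ρ x : ℂ))
  have hcoeff₀ : coeff 0 = 0 := by
    simp [coeff, fourierCoeffOn_eq_integral, intervalIntegral.integral_ofReal, hmean]
  have hend : ∀ g : ℝ → ℝ, Periodic g (2 * π) → (g π : ℂ) = g (-π) := fun g hg => by
    simpa [two_mul] using congrArg ofReal (hg (-π))
  have hcoeff : ∀ n : ℤ, (s + n ^ 2 : ℂ) * coeff n = 0 := by
    intro n
    have h₁ := fourierCoeffOn_second_derivative_of_endpoints_eq hπ
      (fun x => (hρ.differentiable (by norm_num) x).hasDerivAt.ofReal_comp)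
      (fun x => (hρ.differentiable_deriv_two x).hasDerivAt.ofReal_comp)
      (by fun_prop) (hend ρ hper) (hend _ hper.deriv) n
    have h₂ : fourierCoeffOn hπ (fun x => ((deriv (deriv ρ) x : ℝ) : ℂ)) n = s * coeff n := by
      simp_rw [hode, ofReal_mul]
      exact fourierCoeffOn.const_mul _ _ _ _
    have hn : (2 * π * n / ((π : ℝ) - ((-π : ℝ) : ℂ)) : ℂ) = n := by
      push_cast
      field_simp [ofReal_ne_zero.mpr pi_pos.ne']
      ring
    rw [h₂, hn] at h₁
    linear_combination h₁
  by_contra! hs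
  have hzero : ∀ n, coeff n = 0 := fun n => by
    rcases eq_or_ne n 0 with rfl | hn
    · exact hcoeff₀
    refine (mul_eq_zero.mp (hcoeff n)).resolve_left fun h => hs n hn ?_
    exact_mod_cast eq_neg_of_add_eq_zero_left h
  apply hρne
  funext x
  simpa using congrFun (hperC.eq_zero_of_fourierCoeffOn_eq_zero hπ (by fun_prop) hzero) x

end Fourier

theorem integral_deriv_deriv_eq_zero_of_periodic {ρ : ℝ → ℝ} (hρ : ContDiff ℝ 2 ρ)
    (hper : Periodic ρ (2 * π)) : ∫ x in (-π)..π, deriv (deriv ρ) x = 0 := by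
  rw [intervalIntegral.integral_deriv_eq_sub (fun x _ => hρ.differentiable_deriv_two x)
    (Continuous.intervalIntegrable (by fun_prop) _ _), sub_eq_zero]
  simpa [two_mul] using hper.deriv (-π)

theorem integral_Lop_eq_zero (c : ℝ) {ρ : ℝ → ℝ} (hρ : ContDiff ℝ 2 ρ) :
    ∫ x in (-π)..π, Lop c ρ x = 0 := by
  have hint : IntervalIntegrable (fun y => deriv (deriv ρ) y + ρ y / c ^ 2) volume (-π) π :=
    Continuous.intervalIntegrable (by fun_prop) _ _
  simp only [Lop]
  rw [intervalIntegral.integral_sub hint intervalIntegrable_const, intervalIntegral.integral_const]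
  generalize ∫ y in (-π)..π, deriv (deriv ρ) y + ρ y / c ^ 2 = I
  rw [smul_eq_mul]
  field_simp [pi_pos.ne']
  ring

theorem integral_eq_zero_of_Lop_eq_mul {c μ : ℝ} {ρ : ℝ → ℝ} (hρ : ContDiff ℝ 2 ρ)
    (hL : ∀ x, Lop c ρ x = μ * ρ x) (hμ : μ ≠ 0) : ∫ x in (-π)..π, ρ x = 0 := by
  have h := integral_Lop_eq_zero c hρ
  simp_rw [hL, intervalIntegral.integral_const_mul] at h
  exact (mul_eq_zero.mp h).resolve_left hμ

theorem Lop_eq_of_integral_eq_zero (c : ℝ) {ρ : ℝ → ℝ} (hρ : ContDiff ℝ 2 ρ)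
    (hρ'' : ∫ x in (-π)..π, deriv (deriv ρ) x = 0) (hmean : ∫ x in (-π)..π, ρ x = 0) (x : ℝ) :
    Lop c ρ x = deriv (deriv ρ) x + ρ x / c ^ 2 := by
  rw [Lop, intervalIntegral.integral_add (Continuous.intervalIntegrable (by fun_prop) _ _)
    (Continuous.intervalIntegrable (by fun_prop) _ _), intervalIntegral.integral_div, hρ'', hmean]
  simp

theorem deriv_deriv_cos_mul (k : ℝ) :
    deriv (deriv fun x => cos (k * x)) = fun x => -k ^ 2 * cos (k * x) := by
  have h₁ : ∀ x, HasDerivAt (fun x => cos (k * x)) (-k * sin (k * x)) x := fun x =>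
    ((hasDerivAt_id' x).const_mul k).cos.congr_deriv (by ring)
  have h₂ : ∀ x, HasDerivAt (fun x => -k * sin (k * x)) (-k ^ 2 * cos (k * x)) x := fun x =>
    (((hasDerivAt_id' x).const_mul k).sin.const_mul (-k)).congr_deriv (by ring)
  rw [funext fun x => (h₁ x).deriv]
  exact funext fun x => (h₂ x).deriv

theorem integral_cos_int_mul_eq_zero {k : ℤ} (hk : k ≠ 0) :
    ∫ x in (-π)..π, cos (k * x) = 0 := by
  rw [intervalIntegral.integral_comp_mul_left cos (Int.cast_ne_zero.mpr hk), integral_cos]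
  simp [sin_int_mul_pi]

theorem periodic_cos_int_mul (k : ℤ) : Periodic (fun x => cos (k * x)) (2 * π) := fun x => by
  simp only [mul_add, cos_add_int_mul_two_pi]

theorem Lop_const_one (c x : ℝ) : Lop c (fun _ => 1) x = 0 := by
  simp only [Lop, deriv_const', intervalIntegral.integral_const, smul_eq_mul]
  field_simp [pi_pos.ne']
  ring

theorem Lop_cos_int_mul (c : ℝ) {k : ℤ} (hk : k ≠ 0) (x : ℝ) :
    Lop c (fun y => cos (k * y)) x = (1 / c ^ 2 - (k : ℝ) ^ 2) * cos (k * x) := by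
  have hcos : ContDiff ℝ 2 fun y => cos (k * y) := by fun_prop
  rw [Lop_eq_of_integral_eq_zero c hcos
    (integral_deriv_deriv_eq_zero_of_periodic hcos (periodic_cos_int_mul k))
    (integral_cos_int_mul_eq_zero hk), deriv_deriv_cos_mul]
  ring

theorem spectrum_of_linearization_general (c : ℝ) :
    {μ : ℝ | ∃ ρ : ℝ → ℝ, ContDiff ℝ 2 ρ ∧ Function.Periodic ρ (2 * π) ∧ ρ ≠ 0 ∧
        ∀ x, Lop c ρ x = μ * ρ x} =
      {0} ∪ {μ : ℝ | ∃ k : ℤ, k ≠ 0 ∧ μ = 1 / c ^ 2 - (k : ℝ) ^ 2} := by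
  ext μ
  constructor
  · rintro ⟨ρ, hρ, hper, hρne, hL⟩
    rcases eq_or_ne μ 0 with rfl | hμ
    · exact Or.inl rfl
    have hmean := integral_eq_zero_of_Lop_eq_mul hρ hL hμ
    have hode : ∀ x, deriv (deriv ρ) x = (μ - 1 / c ^ 2) * ρ x := fun x => by
      have := hL x
      rw [Lop_eq_of_integral_eq_zero c hρ
        (integral_deriv_deriv_eq_zero_of_periodic hρ hper) hmean] at this
      linear_combination this
    obtain ⟨k, hk, hs⟩ := exists_eq_neg_sq_of_deriv_deriv_eq_mul hρ hper hρne hmean hode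
    exact Or.inr ⟨k, hk, by linarith⟩
  · rintro (hμ | ⟨k, hk, rfl⟩)
    · rw [Set.mem_singleton_iff.mp hμ]
      exact ⟨fun _ => 1, contDiff_const, fun _ => rfl, one_ne_zero, fun x => by
        simp [Lop_const_one]⟩
    · exact ⟨fun y => cos (k * y), by fun_prop, periodic_cos_int_mul k,
        fun h => by simpa using congrFun h 0, Lop_cos_int_mul c hk⟩

theorem spectrum_of_linearization (c : ℝ) (hc : 0 < c) :
    {μ : ℝ | ∃ ρ : ℝ → ℝ, ContDiff ℝ 2 ρ ∧ Function.Periodic ρ (2 * π) ∧ ρ ≠ 0 ∧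
        ∀ x, Lop c ρ x = μ * ρ x} =
      {0} ∪ {μ : ℝ | ∃ k : ℤ, k ≠ 0 ∧ μ = 1 / c ^ 2 - (k : ℝ) ^ 2} :=
  spectrum_of_linearization_general c
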